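/- arXiv:1812.07738 — 4 statements merged into one kernel-verified Lean document; each statement's English description precedes it below -/
import Mathlib

section
/- If R : H → ℝ is η-strongly convex on a real inner product space H (i.e., for all f, f' ∈ H and t ∈ [0,1], R(t•f + (1-t)•f') ≤ t·R(f) + (1-t)·R(f') - (η/2)·t·(1-t)·‖f - f'‖²), then for any finite family f₁,…,f_m ∈ H, R((1/m)·Σᵢ fᵢ) ≤ (1/m)·Σᵢ R(fᵢ) - (η/(4m²))·Σ_{i≠j} ‖fᵢ - fⱼ‖². -/
open Finset
open scoped RealInnerProductSpace

theorem stmt_0 {H : Type*} [NormedAddCommGroup H] [InnerProductSpace ℝ H]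
    (η : ℝ) (hη : 0 < η) (R : H → ℝ)
    (hsc : ∀ f f' : H, ∀ t : ℝ, t ∈ Set.Icc (0:ℝ) 1 →
      R (t • f + (1 - t) • f') ≤
        t * R f + (1 - t) * R f' - η / 2 * t * (1 - t) * ‖f - f'‖ ^ 2)
    (m : ℕ) (hm : 1 ≤ m) (f : Fin m → H) :
    R ((1 / (m : ℝ)) • ∑ i, f i) ≤
      (1 / (m : ℝ)) * ∑ i, R (f i) -
        η / (4 * (m : ℝ) ^ 2) *
          ∑ i, ∑ j, if i ≠ j then ‖f i - f j‖ ^ 2 else 0 := by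
  have hm0 : (0:ℝ) < (m:ℝ) := by exact_mod_cast Nat.lt_of_lt_of_le Nat.zero_lt_one hm
  set g : H → ℝ := fun x => R x - η / 2 * ‖x‖ ^ 2 with hg
  -- g is convex
  have hconv : ConvexOn ℝ Set.univ g := by
    refine ⟨convex_univ, ?_⟩
    intro x _ y _ a b ha hb hab
    have hb1 : b = 1 - a := by linarith
    subst hb1
    have h := hsc x y a ⟨ha, by linarith⟩
    have hn : ‖a • x + (1 - a) • y‖ ^ 2 =
        a ^ 2 * ‖x‖ ^ 2 + 2 * a * (1 - a) * ⟪x, y⟫ + (1 - a) ^ 2 * ‖y‖ ^ 2 := by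
      rw [← real_inner_self_eq_norm_sq, ← real_inner_self_eq_norm_sq,
        ← real_inner_self_eq_norm_sq]
      simp only [inner_add_left, inner_add_right, real_inner_smul_left, real_inner_smul_right,
        real_inner_comm x y]
      ring
    have hns : ‖x - y‖ ^ 2 = ‖x‖ ^ 2 - 2 * ⟪x, y⟫ + ‖y‖ ^ 2 := norm_sub_sq_real x y
    rw [hns] at h
    simp only [hg, smul_eq_mul]
    rw [hn]
    linear_combination h
  -- Jensen
  have hjensen :
      g (∑ i : Fin m, (1 / (m : ℝ)) • f i) ≤ ∑ i : Fin m, (1 / (m : ℝ)) • g (f i) := by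
    refine hconv.map_sum_le (fun i _ => by positivity) ?_ (fun i _ => Set.mem_univ _)
    simp [Finset.card_univ]
    field_simp
  -- sum identity
  have hkey : ∀ i j : Fin m, (if i ≠ j then ‖f i - f j‖ ^ 2 else 0) = ‖f i - f j‖ ^ 2 := by
    intro i j
    by_cases h : i = j <;> simp [h]
  have hsum : ∑ i : Fin m, ∑ j : Fin m, (if i ≠ j then ‖f i - f j‖ ^ 2 else 0) =
      2 * (m : ℝ) * ∑ i : Fin m, ‖f i‖ ^ 2 - 2 * ‖∑ i : Fin m, f i‖ ^ 2 := by
    have hinner : ‖∑ i : Fin m, f i‖ ^ 2 = ∑ i : Fin m, ∑ j : Fin m, ⟪f i, f j⟫ := by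
      rw [← real_inner_self_eq_norm_sq, sum_inner]
      exact Finset.sum_congr rfl fun i _ => inner_sum _ _ _
    simp only [hkey]
    simp only [norm_sub_sq_real]
    rw [hinner]
    simp only [Finset.sum_add_distrib, Finset.sum_sub_distrib, Finset.sum_const,
      Finset.card_univ, Fintype.card_fin, nsmul_eq_mul, ← Finset.mul_sum]
    ring
  -- pull smul out
  have havg : (1 / (m : ℝ)) • ∑ i : Fin m, f i = ∑ i : Fin m, (1 / (m : ℝ)) • f i :=
    Finset.smul_sum
  have hnormavg : ‖(1 / (m : ℝ)) • ∑ i : Fin m, f i‖ ^ 2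
      = (1 / (m : ℝ)) ^ 2 * ‖∑ i : Fin m, f i‖ ^ 2 := by
    rw [norm_smul]
    simp [abs_of_pos, hm0, mul_pow]
  have hgsum : ∑ i : Fin m, (1 / (m : ℝ)) • g (f i)
      = (1 / (m : ℝ)) * ∑ i : Fin m, R (f i)
        - (1 / (m : ℝ)) * (η / 2) * ∑ i : Fin m, ‖f i‖ ^ 2 := by
    simp only [hg, smul_eq_mul, mul_sub, Finset.sum_sub_distrib, ← Finset.mul_sum]
    ring
  have hR : R ((1 / (m : ℝ)) • ∑ i : Fin m, f i)
      = g ((1 / (m : ℝ)) • ∑ i : Fin m, f i)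
        + η / 2 * ‖(1 / (m : ℝ)) • ∑ i : Fin m, f i‖ ^ 2 := by
    simp [hg]
  rw [hR, hsum]
  rw [havg] at hnormavg ⊢
  have := hjensen
  rw [hgsum] at this
  have hm2 : (m:ℝ)^2 ≠ 0 := by positivity
  have expand : η / (4 * (m : ℝ) ^ 2) *
      (2 * (m : ℝ) * ∑ i : Fin m, ‖f i‖ ^ 2 - 2 * ‖∑ i : Fin m, f i‖ ^ 2)
      = (1 / (m : ℝ)) * (η / 2) * ∑ i : Fin m, ‖f i‖ ^ 2
        - η / 2 * ((1 / (m : ℝ)) ^ 2 * ‖∑ i : Fin m, f i‖ ^ 2) := by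
    field_simp
    ring
  rw [expand, hnormavg]
  linarith
end

section
/- If R : H → ℝ is η-strongly convex, f* minimizes R over H, and f₁,…,f_m ∈ H, then R((1/m)·Σᵢ fᵢ) - R(f*) ≤ (1/m)·Σᵢ (R(fᵢ) - R(f*)) - (η/(4m²))·Σ_{i≠j} ‖fᵢ - fⱼ‖². -/
/-! The function `x ↦ R x - η/2 ‖x‖²` is convex, so Jensen's inequality applies to it at the
average of the `fᵢ`. Adding back the quadratic term leaves `η/2` times the empirical variance
`(1/m) ∑ ‖fᵢ‖² - ‖(1/m) ∑ fᵢ‖²`, which equals `1/(2m²) ∑_{i,j} ‖fᵢ - fⱼ‖²`. -/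

open Finset

section

variable {ι H : Type*} [NormedAddCommGroup H] [InnerProductSpace ℝ H]

theorem sum_sum_mul_mul_norm_sub_sq (s : Finset ι) (w : ι → ℝ) (p : ι → H)
    (hw : ∑ i ∈ s, w i = 1) :
    ∑ i ∈ s, ∑ j ∈ s, w i * w j * ‖p i - p j‖ ^ 2 =
      2 * (∑ i ∈ s, w i * ‖p i‖ ^ 2 - ‖∑ i ∈ s, w i • p i‖ ^ 2) := by
  have hcross : ‖∑ i ∈ s, w i • p i‖ ^ 2 =
      ∑ i ∈ s, ∑ j ∈ s, w i * w j * inner ℝ (p i) (p j) := by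
    simp only [← real_inner_self_eq_norm_sq, sum_inner, inner_sum, real_inner_smul_left,
      real_inner_smul_right, mul_assoc]
    exact sum_congr rfl fun i _ ↦ sum_congr rfl fun j _ ↦ by rw [real_inner_comm]
  simp only [hcross, norm_sub_sq_real, mul_sub, mul_add, sum_add_distrib, sum_sub_distrib,
    ← sum_mul, ← mul_sum]
  simp only [mul_assoc, ← mul_sum, hw, ← sum_mul, one_mul, mul_left_comm (w _) (2 : ℝ)]
  ring

theorem StrongConvexOn.map_sum_le_sub {s : Set H} {η : ℝ} {R : H → ℝ}
    (hR : StrongConvexOn s η R) {t : Finset ι} {w : ι → ℝ} {p : ι → H}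
    (h₀ : ∀ i ∈ t, 0 ≤ w i) (h₁ : ∑ i ∈ t, w i = 1) (hmem : ∀ i ∈ t, p i ∈ s) :
    R (∑ i ∈ t, w i • p i) ≤
      ∑ i ∈ t, w i * R (p i) - η / 4 * ∑ i ∈ t, ∑ j ∈ t, w i * w j * ‖p i - p j‖ ^ 2 := by
  have hjensen := (strongConvexOn_iff_convex.mp hR).map_sum_le h₀ h₁ hmem
  simp only [smul_eq_mul, mul_sub, sum_sub_distrib, mul_left_comm (w _) (η / 2),
    ← mul_sum] at hjensen
  rw [sum_sum_mul_mul_norm_sub_sq t w p h₁]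
  linarith

theorem strongConvexOn_univ_of_forall_mem_Icc {η : ℝ} {R : H → ℝ}
    (hR : ∀ f f' : H, ∀ t ∈ Set.Icc (0 : ℝ) 1,
      R (t • f + (1 - t) • f') ≤ t * R f + (1 - t) * R f' - η / 2 * t * (1 - t) * ‖f - f'‖ ^ 2) :
    StrongConvexOn Set.univ η R := by
  refine ⟨convex_univ, fun f _ f' _ a b ha hb hab ↦ ?_⟩
  obtain rfl : b = 1 - a := by linarith
  have := hR f f' a ⟨ha, by linarith⟩
  simp only [smul_eq_mul]
  linarith

end

theorem stmt_1_general {H : Type*} [NormedAddCommGroup H] [InnerProductSpace ℝ H]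
    (η : ℝ) (R : H → ℝ)
    (hsc : ∀ f f' : H, ∀ t : ℝ, t ∈ Set.Icc (0:ℝ) 1 →
      R (t • f + (1 - t) • f') ≤
        t * R f + (1 - t) * R f' - η / 2 * t * (1 - t) * ‖f - f'‖ ^ 2)
    (m : ℕ) (hm : 1 ≤ m) (f : Fin m → H) (fstar : H) :
    R ((1 / (m : ℝ)) • ∑ i, f i) - R fstar ≤
      (1 / (m : ℝ)) * ∑ i, (R (f i) - R fstar) -
        η / (4 * (m : ℝ) ^ 2) *
          ∑ i, ∑ j, if i ≠ j then ‖f i - f j‖ ^ 2 else 0 := by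
  have hm₀ : (m : ℝ) ≠ 0 := Nat.cast_ne_zero.mpr (by omega)
  have hweights : ∑ _i : Fin m, 1 / (m : ℝ) = 1 := by simp [hm₀]
  have hjensen := (strongConvexOn_univ_of_forall_mem_Icc hsc).map_sum_le_sub
    (fun _ _ ↦ by positivity) hweights (fun i _ ↦ Set.mem_univ (f i))
  have hdiag : ∀ i j : Fin m, (if i ≠ j then ‖f i - f j‖ ^ 2 else 0) = ‖f i - f j‖ ^ 2 := by
    intro i j
    split_ifs with h <;> simp_all
  simp only [← smul_sum, ← mul_sum] at hjensen
  rw [sum_sub_distrib, mul_sub]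
  simp only [hdiag, sum_const, card_univ, Fintype.card_fin, nsmul_eq_mul]
  field_simp at hjensen ⊢
  linarith

theorem stmt_1 {H : Type*} [NormedAddCommGroup H] [InnerProductSpace ℝ H]
    (η : ℝ) (hη : 0 < η) (R : H → ℝ)
    (hsc : ∀ f f' : H, ∀ t : ℝ, t ∈ Set.Icc (0:ℝ) 1 →
      R (t • f + (1 - t) • f') ≤
        t * R f + (1 - t) * R f' - η / 2 * t * (1 - t) * ‖f - f'‖ ^ 2)
    (m : ℕ) (hm : 1 ≤ m) (f : Fin m → H) (fstar : H) :
    R ((1 / (m : ℝ)) • ∑ i, f i) - R fstar ≤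
      (1 / (m : ℝ)) * ∑ i, (R (f i) - R fstar) -
        η / (4 * (m : ℝ) ^ 2) *
          ∑ i, ∑ j, if i ≠ j then ‖f i - f j‖ ^ 2 else 0 :=
  stmt_1_general η R hsc m hm f fstar
end

section
/- Let H be a real Hilbert space, let R and R̂ be differentiable functions on H with R̂ convex on a convex set C, let ĥ minimize R̂ over C, and let f* ∈ C. If R satisfies the strong convexity inequality R(ĥ) - R(f*) + (η/2)·‖ĥ - f*‖² ≤ ⟨∇R(ĥ), ĥ - f*⟩, then R(ĥ) - R(f*) + (η/2)·‖ĥ - f*‖² ≤ (‖∇R(ĥ) - ∇R(f*) - (∇R̂(ĥ) - ∇R̂(f*))‖ + ‖∇R(f*) - ∇R̂(f*)‖)·‖ĥ - f*‖. -/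
open RealInnerProductSpace

theorem stmt_4 {H : Type*} [NormedAddCommGroup H] [InnerProductSpace ℝ H]
    [CompleteSpace H] (C : Set H) (hC : Convex ℝ C) (η : ℝ) (hη : 0 < η)
    (R Rhat : H → ℝ) (hRdiff : Differentiable ℝ R)
    (hRhatdiff : Differentiable ℝ Rhat) (hRhatconv : ConvexOn ℝ C Rhat)
    (hhat : H) (hhatmem : hhat ∈ C) (hmin : ∀ f ∈ C, Rhat hhat ≤ Rhat f)
    (fstar : H) (hfstar : fstar ∈ C)
    (hsc : R hhat - R fstar + η / 2 * ‖hhat - fstar‖ ^ 2 ≤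
      ⟪gradient R hhat, hhat - fstar⟫) :
    R hhat - R fstar + η / 2 * ‖hhat - fstar‖ ^ 2 ≤
      (‖gradient R hhat - gradient R fstar -
          (gradient Rhat hhat - gradient Rhat fstar)‖ +
        ‖gradient R fstar - gradient Rhat fstar‖) * ‖hhat - fstar‖ := by
  set d := hhat - fstar with hd
  set g := gradient R hhat
  set gs := gradient R fstar
  set gh := gradient Rhat hhat with hgh
  set ghs := gradient Rhat fstar
  -- first-order optimality: ⟪gh, fstar - hhat⟫ ≥ 0
  have hopt : 0 ≤ ⟪gh, fstar - hhat⟫ := by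
    have hmem : fstar - hhat ∈ posTangentConeAt C hhat :=
      sub_mem_posTangentConeAt_of_segment_subset (hC.segment_subset hhatmem hfstar)
    have hgrad : HasGradientAt Rhat gh hhat := (hRhatdiff hhat).hasGradientAt
    have hfd : HasFDerivWithinAt Rhat ((InnerProductSpace.toDual ℝ H) gh) C hhat :=
      (hasGradientAt_iff_hasFDerivAt.1 hgrad).hasFDerivWithinAt
    have hlm : IsLocalMinOn Rhat C hhat :=
      (isMinOn_iff.2 fun x hx => hmin x hx).filter_mono inf_le_right
    have := hlm.hasFDerivWithinAt_nonneg hfd hmem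
    simpa [InnerProductSpace.toDual_apply_apply] using this
  have hopt' : ⟪gh, d⟫ ≤ 0 := by
    have : ⟪gh, d⟫ = -⟪gh, fstar - hhat⟫ := by
      rw [← inner_neg_right, neg_sub]
    linarith [this ▸ neg_nonpos_of_nonneg hopt]
  have hdecomp : ⟪g, d⟫ = ⟪g - gs - (gh - ghs), d⟫ + ⟪gs - ghs, d⟫ + ⟪gh, d⟫ := by
    rw [← inner_add_left, ← inner_add_left]
    congr 1
    abel
  calc R hhat - R fstar + η / 2 * ‖hhat - fstar‖ ^ 2 ≤ ⟪g, d⟫ := hsc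
    _ = ⟪g - gs - (gh - ghs), d⟫ + ⟪gs - ghs, d⟫ + ⟪gh, d⟫ := hdecomp
    _ ≤ ‖g - gs - (gh - ghs)‖ * ‖d‖ + ‖gs - ghs‖ * ‖d‖ + 0 := by
        have h1 := real_inner_le_norm (g - gs - (gh - ghs)) d
        have h2 := real_inner_le_norm (gs - ghs) d
        linarith
    _ = (‖g - gs - (gh - ghs)‖ + ‖gs - ghs‖) * ‖d‖ := by ring
end

section
/- Let H be a real Hilbert space and ξ₁, …, ξ_n i.i.d. H-valued random variables with ‖ξᵢ‖ ≤ M almost surely and E[‖ξ₁‖²] = σ². Then for every δ ∈ (0,1), with probability at least 1 - δ, ‖(1/n)·Σᵢ (ξᵢ - E[ξᵢ])‖ ≤ 2M·log(2/δ)/n + √(2σ²·log(2/δ)/n). -/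
/-
Pinelis' method. Writing `‖x + y‖²` as a convex combination of `(‖x‖ - ‖y‖)²` and `(‖x‖ + ‖y‖)²`
with weights `(1 ∓ ⟪x, y⟫ / (‖x‖ ‖y‖)) / 2`, the convexity of `t ↦ cosh √t` gives
`cosh ‖x + y‖ ≤ cosh ‖x‖ · (exp ‖y‖ - ‖y‖) + (a term linear in y)`. Hence for a centred summand
`Y` with `‖Y‖ ≤ b` and `E‖Y‖² ≤ v`,
`E cosh (l‖x + Y‖) ≤ cosh (l‖x‖) · E[exp (l‖Y‖) - l‖Y‖] ≤ cosh (l‖x‖) · exp (l²v / (2(1 - lb)))`.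
By independence this iterates along the partial sums, and Markov's inequality for `cosh (l‖S_n‖)`
at `l = 2L / (√(2nvL) + 2bL)` gives `P(‖S_n‖ > bL + √(2nvL)) ≤ 2 e^{-L}`. The theorem is the case
`b = 2M`, `v = σ²`, `L = log (2/δ)` for the summands `ξᵢ - E ξᵢ`.
-/

open MeasureTheory ProbabilityTheory Real Set
open scoped Nat Finset RealInnerProductSpace

lemma convexOn_Ici_of_hasSum_pow {c : ℕ → ℝ} {g : ℝ → ℝ} (hc : ∀ k, 0 ≤ c k)
    (hg : ∀ t, 0 ≤ t → HasSum (fun k ↦ c k * t ^ k) (g t)) : ConvexOn ℝ (Ici 0) g := by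
  refine ⟨convex_Ici 0, fun a ha b hb p q hp hq hpq ↦ ?_⟩
  refine hasSum_le (fun k ↦ ?_) (hg _ (by simp only [mem_Ici] at ha hb; positivity))
    (((hg a ha).mul_left p).add ((hg b hb).mul_left q))
  have := mul_le_mul_of_nonneg_left ((convexOn_pow k).2 ha hb hp hq hpq) (hc k)
  simp only [smul_eq_mul] at this ⊢
  linarith

lemma convexOn_cosh_sqrt : ConvexOn ℝ (Ici 0) (fun t ↦ cosh √t) :=
  convexOn_Ici_of_hasSum_pow (c := fun k ↦ ((2 * k)! : ℝ)⁻¹) (fun k ↦ by positivity)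
    fun t ht ↦ by simpa [pow_mul, sq_sqrt ht, div_eq_inv_mul] using hasSum_cosh √t

lemma cosh_le_of_sq_eq {a b θ r : ℝ} (hθ : |θ| ≤ 1) (hr : r ^ 2 = a ^ 2 + 2 * θ * a * b + b ^ 2) :
    cosh r ≤ cosh a * cosh b + θ * (sinh a * sinh b) := by
  obtain ⟨hθ₁, hθ₂⟩ := abs_le.1 hθ
  have hconv := convexOn_cosh_sqrt.2 (sq_nonneg (a - b)) (sq_nonneg (a + b))
    (by linarith : 0 ≤ (1 - θ) / 2) (by linarith : 0 ≤ (1 + θ) / 2) (by ring)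
  have hsq : (1 - θ) / 2 * (a - b) ^ 2 + (1 + θ) / 2 * (a + b) ^ 2 = r ^ 2 := by
    rw [hr]; ring
  simp only [smul_eq_mul, hsq, sqrt_sq_eq_abs, cosh_abs, cosh_sub, cosh_add] at hconv
  linarith

lemma cosh_le_cosh_mul_exp_sub_add {a b θ r : ℝ} (ha : 0 ≤ a) (hb : 0 ≤ b) (hθ : |θ| ≤ 1)
    (hr : r ^ 2 = a ^ 2 + 2 * θ * a * b + b ^ 2) :
    cosh r ≤ cosh a * (exp b - b) + θ * b * sinh a := by
  have hsinh : θ * sinh a ≤ cosh a :=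
    calc θ * sinh a ≤ |θ| * sinh a := by gcongr; exact le_abs_self θ
      _ ≤ 1 * sinh a := by gcongr
      _ ≤ cosh a := by linarith [sinh_lt_cosh a]
  have hb' : 0 ≤ sinh b - b := sub_nonneg.2 (self_le_sinh_iff.2 hb)
  rw [← cosh_add_sinh b]
  nlinarith [cosh_le_of_sq_eq hθ hr, mul_le_mul_of_nonneg_right hsinh hb']

lemma exp_sub_one_sub_le {u : ℝ} (h0 : 0 ≤ u) (h1 : u < 1) :
    exp u - 1 - u ≤ u ^ 2 / (2 * (1 - u)) := by
  have hexp : HasSum (fun k ↦ u ^ (k + 2) / (k + 2)!) (exp u - 1 - u) := by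
    have := (hasSum_nat_add_iff' 2).2 (NormedSpace.expSeries_div_hasSum_exp u)
    simpa [exp_eq_exp_ℝ, Finset.sum_range_succ, sub_sub] using this
  have hgeom : HasSum (fun k ↦ u ^ 2 / 2 * u ^ k) (u ^ 2 / (2 * (1 - u))) := by
    have := (hasSum_geometric_of_lt_one h0 h1).mul_left (u ^ 2 / 2)
    rwa [← div_eq_mul_inv, div_div] at this
  refine hasSum_le (fun k ↦ ?_) hexp hgeom
  have h2 : (2 : ℝ) ≤ (k + 2)! := by exact_mod_cast (Nat.factorial_le (by omega : 2 ≤ k + 2))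
  rw [div_mul_eq_mul_div, pow_add, mul_comm (u ^ k)]
  exact div_le_div_of_nonneg_left (by positivity) (by norm_num) h2

lemma exists_bernstein_exponent {b V L : ℝ} (hb : 0 ≤ b) (hV : 0 < V) (hL : 0 < L) :
    ∃ l, 0 ≤ l ∧ l * b < 1 ∧
      l ^ 2 * V / (2 * (1 - l * b)) - l * (b * L + √(2 * V * L)) = -L := by
  set w := √(2 * V * L)
  have hw : 0 < w := sqrt_pos.2 (by positivity)
  have hw2 : w ^ 2 = 2 * V * L := sq_sqrt (by positivity)
  have hd : 0 < w + 2 * b * L := by positivity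
  have hlb : 2 * L / (w + 2 * b * L) * b < 1 := by
    rw [div_mul_eq_mul_div, div_lt_one hd]; linarith
  refine ⟨2 * L / (w + 2 * b * L), by positivity, hlb, ?_⟩
  have h1 : 1 - 2 * L / (w + 2 * b * L) * b = w / (w + 2 * b * L) := by field_simp; ring
  rw [h1]
  field_simp
  linear_combination -hw2

section Integration

variable {Ω : Type*} [MeasurableSpace Ω] {μ : Measure Ω}

lemma Continuous.integrable_comp_of_norm_le [IsFiniteMeasure μ] {E : Type*}
    [NormedAddCommGroup E] {g : ℝ → E} (hg : Continuous g) {f : Ω → ℝ}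
    (hf : AEStronglyMeasurable f μ) {b : ℝ} (hfb : ∀ᵐ ω ∂μ, ‖f ω‖ ≤ b) :
    Integrable (fun ω ↦ g (f ω)) μ := by
  obtain ⟨C, hC⟩ := (isCompact_Icc (a := -b) (b := b)).exists_bound_of_continuousOn hg.continuousOn
  refine Integrable.of_bound (hg.comp_aestronglyMeasurable hf) C ?_
  filter_upwards [hfb] with ω hω
  exact hC _ (abs_le.1 hω)

lemma ae_norm_sum_le {E ι : Type*} [SeminormedAddCommGroup E] {X : ι → Ω → E} {b : ℝ}
    (hXb : ∀ i, ∀ᵐ ω ∂μ, ‖X i ω‖ ≤ b) (s : Finset ι) :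
    ∀ᵐ ω ∂μ, ‖∑ i ∈ s, X i ω‖ ≤ #s * b := by
  filter_upwards [(s.eventually_all).2 fun i _ ↦ hXb i] with ω hω
  calc ‖∑ i ∈ s, X i ω‖ ≤ ∑ i ∈ s, ‖X i ω‖ := norm_sum_le _ _
    _ ≤ #s * b := by simpa using Finset.sum_le_sum hω

lemma ae_eq_zero_of_integral_norm_sq_eq_zero {E : Type*} [NormedAddCommGroup E] {f : Ω → E}
    (hf : MemLp f 2 μ) (h : ∫ ω, ‖f ω‖ ^ 2 ∂μ = 0) : f =ᵐ[μ] 0 := by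
  rw [integral_eq_zero_iff_of_nonneg (fun ω ↦ sq_nonneg _) (hf.integrable_norm_pow two_ne_zero)]
    at h
  filter_upwards [h] with ω hω
  simpa using hω

lemma measureReal_lt_norm_le_integral_cosh [IsFiniteMeasure μ] {E : Type*} [NormedAddCommGroup E]
    {S : Ω → E} {l c : ℝ} (hl : 0 ≤ l) (hc : 0 ≤ c) (hS : Integrable (fun ω ↦ cosh (l * ‖S ω‖)) μ) :
    μ.real {ω | c < ‖S ω‖} ≤ 2 * exp (-(l * c)) * ∫ ω, cosh (l * ‖S ω‖) ∂μ := by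
  have hcosh : exp (l * c) / 2 ≤ cosh (l * c) := by
    rw [cosh_eq]; linarith [exp_pos (-(l * c))]
  have hsub : {ω | c < ‖S ω‖} ⊆ {ω | exp (l * c) / 2 ≤ cosh (l * ‖S ω‖)} :=
    fun ω hω ↦ hcosh.trans <| cosh_le_cosh.2 <| by
      rw [abs_of_nonneg (by positivity), abs_of_nonneg (by positivity)]
      exact mul_le_mul_of_nonneg_left hω.le hl
  have hmarkov := mul_meas_ge_le_integral_of_nonneg (ae_of_all _ fun ω ↦ (cosh_pos _).le) hS
    (exp (l * c) / 2)
  calc μ.real {ω | c < ‖S ω‖} ≤ μ.real {ω | exp (l * c) / 2 ≤ cosh (l * ‖S ω‖)} :=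
        measureReal_mono hsub
    _ ≤ (∫ ω, cosh (l * ‖S ω‖) ∂μ) / (exp (l * c) / 2) := by
        rw [le_div_iff₀' (by positivity)]; exact hmarkov
    _ = 2 * exp (-(l * c)) * ∫ ω, cosh (l * ‖S ω‖) ∂μ := by
        rw [exp_neg]; field_simp

variable [IsProbabilityMeasure μ]

lemma ae_norm_sub_integral_le {E : Type*} [NormedAddCommGroup E] [NormedSpace ℝ E] {f : Ω → E}
    {M : ℝ} (hf : ∀ᵐ ω ∂μ, ‖f ω‖ ≤ M) : ∀ᵐ ω ∂μ, ‖f ω - ∫ ω', f ω' ∂μ‖ ≤ 2 * M := by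
  have hmean : ‖∫ ω, f ω ∂μ‖ ≤ M := by simpa using norm_integral_le_of_norm_le_const hf
  filter_upwards [hf] with ω hω
  linarith [norm_sub_le (f ω) (∫ ω', f ω' ∂μ)]

lemma ofReal_one_sub_le_measure_le {f : Ω → ℝ} (hf : Measurable f) {t δ : ℝ}
    (h : μ.real {ω | t < f ω} ≤ δ) : ENNReal.ofReal (1 - δ) ≤ μ {ω | f ω ≤ t} := by
  have hcompl : {ω | f ω ≤ t} = {ω | t < f ω}ᶜ := by ext; simp
  rw [hcompl, prob_compl_eq_one_sub (measurableSet_lt measurable_const hf), ← ofReal_measureReal,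
    ← ENNReal.ofReal_one, ← ENNReal.ofReal_sub _ measureReal_nonneg]
  exact ENNReal.ofReal_le_ofReal (by linarith)

lemma integral_exp_mul_sub_le {f : Ω → ℝ} (hf : AEStronglyMeasurable f μ) {b v l : ℝ}
    (hl : 0 ≤ l) (hlb : l * b < 1) (hf0 : ∀ᵐ ω ∂μ, 0 ≤ f ω) (hfb : ∀ᵐ ω ∂μ, f ω ≤ b)
    (hfv : ∫ ω, f ω ^ 2 ∂μ ≤ v) :
    ∫ ω, (exp (l * f ω) - l * f ω) ∂μ ≤ exp (l ^ 2 * v / (2 * (1 - l * b))) := by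
  set K := l ^ 2 / (2 * (1 - l * b))
  have hK : 0 ≤ K := div_nonneg (sq_nonneg l) (by linarith)
  have hnorm : ∀ᵐ ω ∂μ, ‖f ω‖ ≤ b := by
    filter_upwards [hf0, hfb] with ω h0 h1
    rwa [norm_of_nonneg h0]
  have hpoint : ∀ᵐ ω ∂μ, exp (l * f ω) - l * f ω ≤ 1 + K * f ω ^ 2 := by
    filter_upwards [hf0, hfb] with ω h0 h1
    have hlf : l * f ω ≤ l * b := mul_le_mul_of_nonneg_left h1 hl
    calc exp (l * f ω) - l * f ω ≤ 1 + (l * f ω) ^ 2 / (2 * (1 - l * f ω)) := by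
          linarith [exp_sub_one_sub_le (mul_nonneg hl h0) (hlf.trans_lt hlb)]
      _ ≤ 1 + (l * f ω) ^ 2 / (2 * (1 - l * b)) := by gcongr
      _ = 1 + K * f ω ^ 2 := by ring
  have hsq : Integrable (fun ω ↦ f ω ^ 2) μ :=
    (continuous_pow 2).integrable_comp_of_norm_le hf hnorm
  have hexp : Integrable (fun ω ↦ exp (l * f ω) - l * f ω) μ :=
    (by fun_prop : Continuous fun r ↦ exp (l * r) - l * r).integrable_comp_of_norm_le hf hnorm
  calc ∫ ω, (exp (l * f ω) - l * f ω) ∂μ ≤ ∫ ω, (1 + K * f ω ^ 2) ∂μ :=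
        integral_mono_ae hexp ((integrable_const 1).add (hsq.const_mul K)) hpoint
    _ = 1 + K * ∫ ω, f ω ^ 2 ∂μ := by
        rw [integral_add (integrable_const 1) (hsq.const_mul K), integral_const_mul]; simp
    _ ≤ 1 + K * v := by gcongr
    _ ≤ exp (K * v) := by linarith [add_one_le_exp (K * v)]
    _ = exp (l ^ 2 * v / (2 * (1 - l * b))) := by rw [mul_div_right_comm]

end Integration

section Hilbert

variable {H : Type*} [NormedAddCommGroup H] [InnerProductSpace ℝ H]

lemma cosh_mul_norm_add_le {l : ℝ} (hl : 0 ≤ l) (x d : H) :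
    cosh (l * ‖x + d‖) ≤
      cosh (l * ‖x‖) * (exp (l * ‖d‖) - l * ‖d‖) + l * sinh (l * ‖x‖) / ‖x‖ * ⟪x, d⟫ := by
  -- the cosine of the angle between `x` and `d`, and `0` (by `/ 0 = 0`) if either vanishes
  set θ := ⟪x, d⟫ / (‖x‖ * ‖d‖)
  have hθ : |θ| ≤ 1 := by
    rw [abs_div, abs_of_nonneg (by positivity : (0 : ℝ) ≤ ‖x‖ * ‖d‖)]
    exact div_le_one_of_le₀ (abs_real_inner_le_norm x d) (by positivity)
  have hθxd : θ * (‖x‖ * ‖d‖) = ⟪x, d⟫ := by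
    rcases eq_or_ne (‖x‖ * ‖d‖) 0 with h | h
    · have := abs_real_inner_le_norm x d
      rw [h, abs_nonpos_iff] at this
      simp [θ, h, this]
    · exact div_mul_cancel₀ _ h
  have key := cosh_le_cosh_mul_exp_sub_add (r := l * ‖x + d‖) (by positivity : 0 ≤ l * ‖x‖)
    (by positivity : 0 ≤ l * ‖d‖) hθ (by rw [mul_pow, norm_add_sq_real, ← hθxd]; ring)
  convert key using 2
  rw [← hθxd]
  rcases eq_or_ne ‖x‖ 0 with h | h
  · simp [h]
  · field_simp

variable {Ω : Type*} [MeasurableSpace Ω] {μ : Measure Ω} [IsProbabilityMeasure μ] [CompleteSpace H]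

lemma integral_norm_sub_integral_sq {f : Ω → H} (hf : MemLp f 2 μ) :
    ∫ ω, ‖f ω - ∫ ω', f ω' ∂μ‖ ^ 2 ∂μ = ∫ ω, ‖f ω‖ ^ 2 ∂μ - ‖∫ ω, f ω ∂μ‖ ^ 2 := by
  set m := ∫ ω, f ω ∂μ
  have hf1 : Integrable f μ := hf.integrable one_le_two
  have hsq : Integrable (fun ω ↦ ‖f ω‖ ^ 2) μ := hf.integrable_norm_pow two_ne_zero
  have hinner : Integrable (fun ω ↦ 2 * ⟪f ω, m⟫) μ := (hf1.inner_const m).const_mul 2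
  simp_rw [norm_sub_sq_real]
  rw [integral_add (f := fun ω ↦ ‖f ω‖ ^ 2 - 2 * ⟪f ω, m⟫) (hsq.sub hinner) (integrable_const _),
    integral_sub hsq hinner, integral_const_mul]
  have hm : ∫ ω, ⟪f ω, m⟫ ∂μ = ‖m‖ ^ 2 := by
    simp only [real_inner_comm m, integral_inner hf1 m]
    exact real_inner_self_eq_norm_sq m
  rw [hm, integral_const, probReal_univ, one_smul]
  ring

variable [MeasurableSpace H] [BorelSpace H] [SecondCountableTopology H]

lemma integral_cosh_mul_norm_add_le {ν : Measure H} [IsProbabilityMeasure ν] {b l : ℝ}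
    (hl : 0 ≤ l) (hb : ∀ᵐ y ∂ν, ‖y‖ ≤ b) (hmean : ∫ y, y ∂ν = 0) (x : H) :
    ∫ y, cosh (l * ‖x + y‖) ∂ν ≤ cosh (l * ‖x‖) * ∫ y, (exp (l * ‖y‖) - l * ‖y‖) ∂ν := by
  have hid : Integrable (fun y : H ↦ y) ν := Integrable.of_bound aestronglyMeasurable_id b hb
  have hcosh : Integrable (fun y ↦ cosh (l * ‖x + y‖)) ν := by
    refine (by fun_prop : Continuous fun r ↦ cosh (l * r)).integrable_comp_of_norm_le
      (by fun_prop) (b := ‖x‖ + b) ?_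
    filter_upwards [hb] with y hy
    rw [norm_norm]
    linarith [norm_add_le x y]
  have hexp : Integrable (fun y : H ↦ exp (l * ‖y‖) - l * ‖y‖) ν :=
    (by fun_prop : Continuous fun r ↦ exp (l * r) - l * r).integrable_comp_of_norm_le
      (by fun_prop) (by simpa using hb)
  calc ∫ y, cosh (l * ‖x + y‖) ∂ν
      ≤ ∫ y, (cosh (l * ‖x‖) * (exp (l * ‖y‖) - l * ‖y‖)
          + l * sinh (l * ‖x‖) / ‖x‖ * ⟪x, y⟫) ∂ν :=
        integral_mono hcosh ((hexp.const_mul _).add ((hid.const_inner x).const_mul _))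
          fun y ↦ cosh_mul_norm_add_le hl x y
    _ = cosh (l * ‖x‖) * ∫ y, (exp (l * ‖y‖) - l * ‖y‖) ∂ν := by
        rw [integral_add (hexp.const_mul _) ((hid.const_inner x).const_mul _), integral_const_mul,
          integral_const_mul, integral_inner hid, hmean, inner_zero_right, mul_zero, add_zero]

lemma integral_cosh_mul_norm_add_le_of_indepFun {U Y : Ω → H} (hU : Measurable U)
    (hY : Measurable Y) (hUY : IndepFun U Y μ) {b c l : ℝ} (hl : 0 ≤ l)
    (hUc : ∀ᵐ ω ∂μ, ‖U ω‖ ≤ c) (hYb : ∀ᵐ ω ∂μ, ‖Y ω‖ ≤ b) (hY0 : ∫ ω, Y ω ∂μ = 0) :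
    ∫ ω, cosh (l * ‖U ω + Y ω‖) ∂μ ≤
      (∫ ω, (exp (l * ‖Y ω‖) - l * ‖Y ω‖) ∂μ) * ∫ ω, cosh (l * ‖U ω‖) ∂μ := by
  have hprod : μ.map (fun ω ↦ (U ω, Y ω)) = (μ.map U).prod (μ.map Y) :=
    (indepFun_iff_map_prod_eq_prod_map_map hU.aemeasurable hY.aemeasurable).1 hUY
  have := Measure.isProbabilityMeasure_map (μ := μ) hY.aemeasurable
  have hcosh : Continuous fun r ↦ cosh (l * r) := by fun_prop
  have hint : Integrable (fun z : H × H ↦ cosh (l * ‖z.1 + z.2‖)) ((μ.map U).prod (μ.map Y)) := by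
    rw [← hprod, integrable_map_measure (by fun_prop) (by fun_prop)]
    refine hcosh.integrable_comp_of_norm_le (by fun_prop) (b := c + b) ?_
    filter_upwards [hUc, hYb] with ω hU hY
    rw [norm_norm]
    linarith [norm_add_le (U ω) (Y ω)]
  have hYb' : ∀ᵐ y ∂μ.map Y, ‖y‖ ≤ b :=
    (ae_map_iff hY.aemeasurable (measurableSet_le (by fun_prop) (by fun_prop))).2 hYb
  have hUc' : ∀ᵐ u ∂μ.map U, ‖u‖ ≤ c :=
    (ae_map_iff hU.aemeasurable (measurableSet_le (by fun_prop) (by fun_prop))).2 hUc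
  have hY0' : ∫ y, y ∂μ.map Y = 0 := by
    rwa [integral_map hY.aemeasurable (f := fun y : H ↦ y) (by fun_prop)]
  calc ∫ ω, cosh (l * ‖U ω + Y ω‖) ∂μ
      = ∫ z, cosh (l * ‖z.1 + z.2‖) ∂(μ.map U).prod (μ.map Y) := by
        rw [← hprod, integral_map (by fun_prop) (by fun_prop)]
    _ = ∫ u, ∫ y, cosh (l * ‖u + y‖) ∂μ.map Y ∂μ.map U := integral_prod _ hint
    _ ≤ ∫ u, cosh (l * ‖u‖) * ∫ y, (exp (l * ‖y‖) - l * ‖y‖) ∂μ.map Y ∂μ.map U := by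
        refine integral_mono_of_nonneg (ae_of_all _ fun u ↦ integral_nonneg fun y ↦ (cosh_pos _).le)
          ((hcosh.integrable_comp_of_norm_le (by fun_prop) (by simpa using hUc')).mul_const _)
          (ae_of_all _ fun u ↦ integral_cosh_mul_norm_add_le hl hYb' hY0' u)
    _ = (∫ ω, (exp (l * ‖Y ω‖) - l * ‖Y ω‖) ∂μ) * ∫ ω, cosh (l * ‖U ω‖) ∂μ := by
        rw [integral_mul_const, integral_map hU.aemeasurable (by fun_prop),
          integral_map hY.aemeasurable (by fun_prop), mul_comm]

lemma integral_cosh_mul_norm_sum_le {ι : Type*} {X : ι → Ω → H} (hXm : ∀ i, Measurable (X i))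
    (hX : iIndepFun X μ) {b v l : ℝ} (hl : 0 ≤ l) (hlb : l * b < 1)
    (hXb : ∀ i, ∀ᵐ ω ∂μ, ‖X i ω‖ ≤ b) (hX0 : ∀ i, ∫ ω, X i ω ∂μ = 0)
    (hXv : ∀ i, ∫ ω, ‖X i ω‖ ^ 2 ∂μ ≤ v) (s : Finset ι) :
    ∫ ω, cosh (l * ‖∑ i ∈ s, X i ω‖) ∂μ ≤ exp (#s * (l ^ 2 * v / (2 * (1 - l * b)))) := by
  classical
  induction s using Finset.induction_on with
  | empty => simp
  | insert i s hi ih =>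
    have hind : IndepFun (fun ω ↦ ∑ j ∈ s, X j ω) (X i) μ := by
      simpa [Finset.sum_fn] using hX.indepFun_finsetSum_of_notMem hXm hi
    have hexp := integral_exp_mul_sub_le (hXm i).norm.aestronglyMeasurable hl hlb
      (ae_of_all _ fun ω ↦ norm_nonneg (X i ω)) (hXb i) (hXv i)
    simp_rw [Finset.sum_insert hi, add_comm (X i _)]
    calc ∫ ω, cosh (l * ‖∑ j ∈ s, X j ω + X i ω‖) ∂μ
        ≤ (∫ ω, (exp (l * ‖X i ω‖) - l * ‖X i ω‖) ∂μ) * ∫ ω, cosh (l * ‖∑ j ∈ s, X j ω‖) ∂μ :=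
          integral_cosh_mul_norm_add_le_of_indepFun (by fun_prop) (hXm i) hind hl
            (ae_norm_sum_le hXb s) (hXb i) (hX0 i)
      _ ≤ exp (l ^ 2 * v / (2 * (1 - l * b))) * exp (#s * (l ^ 2 * v / (2 * (1 - l * b)))) :=
          mul_le_mul hexp ih (integral_nonneg fun ω ↦ (cosh_pos _).le) (exp_pos _).le
      _ = exp (#(insert i s) * (l ^ 2 * v / (2 * (1 - l * b)))) := by
          rw [← exp_add, Finset.card_insert_of_notMem hi]
          congr 1
          push_cast
          ring

lemma measureReal_lt_norm_sum_le {ι : Type*} {X : ι → Ω → H} (hXm : ∀ i, Measurable (X i))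
    (hX : iIndepFun X μ) {b v L : ℝ} (hb : 0 ≤ b) (hv : 0 ≤ v) (hL : 0 < L)
    (hXb : ∀ i, ∀ᵐ ω ∂μ, ‖X i ω‖ ≤ b) (hX0 : ∀ i, ∫ ω, X i ω ∂μ = 0)
    (hXv : ∀ i, ∫ ω, ‖X i ω‖ ^ 2 ∂μ ≤ v) (s : Finset ι) :
    μ.real {ω | b * L + √(2 * (#s * v) * L) < ‖∑ i ∈ s, X i ω‖} ≤ 2 * exp (-L) := by
  set c := b * L + √(2 * (#s * v) * L)
  have hc : 0 ≤ c := by positivity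
  rcases (mul_nonneg (Nat.cast_nonneg #s) hv).eq_or_lt with hV | hV
  · have hXi : ∀ i ∈ s, X i =ᵐ[μ] 0 := fun i hi ↦ by
      have hv0 : v = 0 := by simpa [(Finset.card_pos.2 ⟨i, hi⟩).ne'] using hV.symm
      refine ae_eq_zero_of_integral_norm_sq_eq_zero
        (MemLp.of_bound (hXm i).aestronglyMeasurable b (hXb i)) ?_
      exact le_antisymm (hv0 ▸ hXv i) (integral_nonneg fun ω ↦ sq_nonneg _)
    have hzero : ∀ᵐ ω ∂μ, ∑ i ∈ s, X i ω = 0 := by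
      filter_upwards [(s.eventually_all).2 hXi] with ω hω
      exact Finset.sum_eq_zero hω
    have hnull : μ {ω | c < ‖∑ i ∈ s, X i ω‖} = 0 := by
      rw [measure_eq_zero_iff_ae_notMem]
      filter_upwards [hzero] with ω h
      simpa [h] using hc
    simp only [measureReal_def, hnull, ENNReal.toReal_zero]
    positivity
  obtain ⟨l, hl, hlb, hexp⟩ := exists_bernstein_exponent hb hV hL
  have hint : Integrable (fun ω ↦ cosh (l * ‖∑ i ∈ s, X i ω‖)) μ :=
    (by fun_prop : Continuous fun r ↦ cosh (l * r)).integrable_comp_of_norm_le (by fun_prop)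
      (by simpa using ae_norm_sum_le hXb s)
  calc μ.real {ω | c < ‖∑ i ∈ s, X i ω‖}
      ≤ 2 * exp (-(l * c)) * ∫ ω, cosh (l * ‖∑ i ∈ s, X i ω‖) ∂μ :=
        measureReal_lt_norm_le_integral_cosh hl hc hint
    _ ≤ 2 * exp (-(l * c)) * exp (#s * (l ^ 2 * v / (2 * (1 - l * b)))) := by
        gcongr
        exact integral_cosh_mul_norm_sum_le hXm hX hl hlb hXb hX0 hXv s
    _ = 2 * exp (-L) := by
        rw [← hexp, mul_assoc, ← exp_add]
        congr 2
        ring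

lemma measureReal_lt_norm_average_le {ι : Type*} {X : ι → Ω → H} (hXm : ∀ i, Measurable (X i))
    (hX : iIndepFun X μ) {b v L : ℝ} (hb : 0 ≤ b) (hv : 0 ≤ v) (hL : 0 < L)
    (hXb : ∀ i, ∀ᵐ ω ∂μ, ‖X i ω‖ ≤ b) (hX0 : ∀ i, ∫ ω, X i ω ∂μ = 0)
    (hXv : ∀ i, ∫ ω, ‖X i ω‖ ^ 2 ∂μ ≤ v) {s : Finset ι} (hs : s.Nonempty) :
    μ.real {ω | b * L / #s + √(2 * v * L / #s) < ‖(1 / (#s : ℝ)) • ∑ i ∈ s, X i ω‖} ≤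
      2 * exp (-L) := by
  have hn : (0 : ℝ) < #s := by exact_mod_cast hs.card_pos
  have hthreshold : #s * (b * L / #s + √(2 * v * L / #s)) = b * L + √(2 * (#s * v) * L) := by
    rw [mul_add, mul_div_cancel₀ _ hn.ne', ← sqrt_sq hn.le, ← sqrt_mul (sq_nonneg _),
      sqrt_sq hn.le]
    congr 2
    field_simp
  convert measureReal_lt_norm_sum_le hXm hX hb hv hL hXb hX0 hXv s using 2
  ext ω
  rw [mem_ofPred_eq, mem_ofPred_eq, ← hthreshold, norm_smul, norm_div, norm_one, norm_natCast,
    one_div, ← div_eq_inv_mul, lt_div_iff₀' hn]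

end Hilbert

theorem stmt_9 {H : Type*} [NormedAddCommGroup H] [InnerProductSpace ℝ H]
    [CompleteSpace H] [MeasurableSpace H] [BorelSpace H]
    [SecondCountableTopology H]
    {Ω : Type*} [MeasurableSpace Ω] (μ : Measure Ω) [IsProbabilityMeasure μ]
    (n : ℕ) (hn : 0 < n) (ξ : Fin n → Ω → H)
    (hmeas : ∀ i, Measurable (ξ i))
    (hindep : iIndepFun ξ μ)
    (hident : ∀ i, μ.map (ξ i) = μ.map (ξ ⟨0, hn⟩))
    (M : ℝ) (hM : ∀ i, ∀ᵐ ω ∂μ, ‖ξ i ω‖ ≤ M)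
    (σ2 : ℝ) (hσ2 : σ2 = ∫ ω, ‖ξ ⟨0, hn⟩ ω‖ ^ 2 ∂μ)
    (δ : ℝ) (hδ : δ ∈ Set.Ioo (0:ℝ) 1) :
    ENNReal.ofReal (1 - δ) ≤
      μ {ω | ‖(1 / (n : ℝ)) • ∑ i, (ξ i ω - ∫ ω', ξ i ω' ∂μ)‖ ≤
        2 * M * Real.log (2 / δ) / n +
          Real.sqrt (2 * σ2 * Real.log (2 / δ) / n)} := by
  obtain ⟨hδ0, hδ1⟩ := hδ
  have hL : 0 < log (2 / δ) := log_pos (by rw [lt_div_iff₀ hδ0]; linarith)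
  have hδL : 2 * exp (-log (2 / δ)) = δ := by
    rw [exp_neg, exp_log (by positivity)]; field_simp
  have hM0 : 0 ≤ M := by
    obtain ⟨ω, hω⟩ := (hM ⟨0, hn⟩).exists
    exact (norm_nonneg _).trans hω
  have hσ0 : 0 ≤ σ2 := hσ2 ▸ integral_nonneg fun ω ↦ sq_nonneg _
  have hξ : ∀ i, MemLp (ξ i) 2 μ := fun i ↦ MemLp.of_bound (hmeas i).aestronglyMeasurable M (hM i)
  have hvar : ∀ i, ∫ ω, ‖ξ i ω - ∫ ω', ξ i ω' ∂μ‖ ^ 2 ∂μ ≤ σ2 := fun i ↦ by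
    have hid : IdentDistrib (ξ i) (ξ ⟨0, hn⟩) μ μ :=
      ⟨(hmeas i).aemeasurable, (hmeas _).aemeasurable, hident i⟩
    rw [integral_norm_sub_integral_sq (hξ i), hσ2, hid.norm.pow.integral_eq]
    linarith [sq_nonneg ‖∫ ω, ξ i ω ∂μ‖]
  have htail := measureReal_lt_norm_average_le (fun i ↦ (hmeas i).sub_const _)
    (hindep.comp _ fun i ↦ measurable_id.sub_const _) (by linarith) hσ0 hL
    (fun i ↦ ae_norm_sub_integral_le (hM i))
    (fun i ↦ by simp [integral_sub ((hξ i).integrable one_le_two)]) hvar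
    (Finset.univ_nonempty_iff.2 ⟨⟨0, hn⟩⟩)
  rw [Finset.card_univ, Fintype.card_fin] at htail
  exact ofReal_one_sub_le_measure_le (by fun_prop) (htail.trans_eq hδL)
end
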